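/- arXiv:2409.03306 — 7 statements merged into one kernel-verified Lean document; each statement's English description precedes it below -/
import Mathlib

section
/- Let E : ℝⁿ × ℝᵖ → ℝ be twice continuously differentiable and let s⋆(θ) be a continuously differentiable family of critical points, i.e. ∇ₛE(s⋆(θ), θ) = 0 for all θ in an open set. Let ℓ : ℝⁿ → ℝ be differentiable and C(θ) := ℓ(s⋆(θ)). If λ⋆(θ) ∈ ℝⁿ satisfies ∇ℓ(s⋆(θ)) + ∇²ₛE(s⋆(θ), θ) · λ⋆(θ) = 0, then the total derivative of C satisfies d_θ C(θ) = ∂²_{s,θ}E(s⋆(θ), θ)ᵀ · λ⋆(θ), where ∂²_{s,θ}E denotes the mixed second partial derivative (Jacobian of ∇ₛE with respect to θ). -/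
open scoped RealInnerProductSpace

noncomputable section

abbrev Euc (n : ℕ) := EuclideanSpace ℝ (Fin n)

/-!
Differentiating the critical-point identity `∇ₛE(s⋆(θ), θ) = 0` in `θ` gives `H ∘ Ds⋆ + M = 0`,
with `H` the Hessian of `E` in `s` and `M` the mixed derivative. By the chain rule
`∇C = Ds⋆ᵀ ∇ℓ = -Ds⋆ᵀ H λ⋆`, and since `H` is symmetric (Schwarz) this is `-(H ∘ Ds⋆)ᵀ λ⋆ = Mᵀ λ⋆`.
-/

open Filter Topology InnerProductSpace ContinuousLinearMap

theorem fderiv_left_comp_add_fderiv_right_eq_zero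
    {𝕜 E F G : Type*} [NontriviallyNormedField 𝕜]
    [NormedAddCommGroup E] [NormedSpace 𝕜 E] [NormedAddCommGroup F] [NormedSpace 𝕜 F]
    [NormedAddCommGroup G] [NormedSpace 𝕜 G]
    {Φ : E → F → G} {s : F → E} {y : F}
    (hΦ : DifferentiableAt 𝕜 (Function.uncurry Φ) (s y, y)) (hs : DifferentiableAt 𝕜 s y)
    (hzero : ∀ᶠ y' in 𝓝 y, Φ (s y') y' = 0) :
    (fderiv 𝕜 (fun x => Φ x y) (s y)).comp (fderiv 𝕜 s y) + fderiv 𝕜 (fun y' => Φ (s y) y') y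
      = 0 := by
  set D := fderiv 𝕜 (Function.uncurry Φ) (s y, y)
  have hleft : HasFDerivAt (fun x => Φ x y) (D ∘L inl 𝕜 E F) (s y) :=
    hΦ.hasFDerivAt.comp (f := fun x => (x, y)) (s y) (hasFDerivAt_prodMk_left (s y) y)
  have hright : HasFDerivAt (fun y' => Φ (s y) y') (D ∘L inr 𝕜 E F) y :=
    hΦ.hasFDerivAt.comp (f := fun y' => (s y, y')) y (hasFDerivAt_prodMk_right (s y) y)
  have htotal : HasFDerivAt (fun y' => Φ (s y') y') (D ∘L (fderiv 𝕜 s y).prod (.id 𝕜 F)) y :=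
    hΦ.hasFDerivAt.comp (f := fun y' => (s y', y')) y (hs.hasFDerivAt.prodMk (hasFDerivAt_id y))
  have htotal_zero : D ∘L (fderiv 𝕜 s y).prod (.id 𝕜 F) = 0 :=
    htotal.unique ((hasFDerivAt_const 0 y).congr_of_eventuallyEq hzero)
  rw [hleft.fderiv, hright.fderiv, ← htotal_zero]
  ext v
  simp [← map_add]

variable {E F : Type*}
  [NormedAddCommGroup E] [InnerProductSpace ℝ E] [CompleteSpace E]
  [NormedAddCommGroup F] [InnerProductSpace ℝ F]

theorem contDiff_gradient_left {f : E → F → ℝ} {n : WithTop ℕ∞}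
    (hf : ContDiff ℝ (n + 1) (Function.uncurry f)) :
    ContDiff ℝ n (fun q : E × F => gradient (fun x => f x q.2) q.1) := by
  have hpartial : ∀ q : E × F,
      fderiv ℝ (fun x => f x q.2) q.1 = fderiv ℝ (Function.uncurry f) q ∘L inl ℝ E F := fun q =>
    ((hf.differentiable (by simp)).differentiableAt.hasFDerivAt.comp q.1
      (hasFDerivAt_prodMk_left q.1 q.2)).fderiv
  simp only [gradient, hpartial]
  exact (toDual ℝ E).symm.contDiff.comp
    (((compL ℝ E (E × F) ℝ).flip (inl ℝ E F)).contDiff.comp (hf.fderiv_right le_rfl))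

theorem ContDiffAt.isSelfAdjoint_fderiv_gradient {g : E → ℝ} {x : E} (hg : ContDiffAt ℝ 2 g x) :
    IsSelfAdjoint (fderiv ℝ (gradient g) x) := by
  set D := fderiv ℝ (fderiv ℝ g) x
  have hD : HasFDerivAt (fderiv ℝ g) D x :=
    ((hg.fderiv_right (m := 1) le_rfl).differentiableAt one_ne_zero).hasFDerivAt
  let J : StrongDual ℝ E →L[ℝ] E := (toDual ℝ E).symm.toContinuousLinearEquiv.toContinuousLinearMap
  have hgrad : HasFDerivAt (gradient g) (J ∘L D) x := J.hasFDerivAt.comp x hD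
  have hsymm : IsSymmSndFDerivAt ℝ g x := hg.isSymmSndFDerivAt (by simp)
  rw [isSelfAdjoint_iff_isSymmetric, hgrad.fderiv]
  intro u w
  change ⟪(toDual ℝ E).symm (D u), w⟫ = ⟪u, (toDual ℝ E).symm (D w)⟫
  rw [real_inner_comm _ u, toDual_symm_apply, toDual_symm_apply, hsymm]

theorem gradient_comp [CompleteSpace F] {ℓ : E → ℝ} {s : F → E} {y : F}
    (hℓ : DifferentiableAt ℝ ℓ (s y)) (hs : DifferentiableAt ℝ s y) :
    gradient (fun y' => ℓ (s y')) y = adjoint (fderiv ℝ s y) (gradient ℓ (s y)) := by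
  refine ext_inner_left ℝ fun v => ?_
  rw [adjoint_inner_right, real_inner_comm, inner_gradient_left, real_inner_comm,
    inner_gradient_left, fderiv_fun_comp y hℓ hs]
  rfl

/-- Lagrangian/adjoint gradient formula: if `s⋆(θ)` is a C¹ family of
critical points of `s ↦ E(s, θ)` and `λ⋆(θ)` solves the adjoint equation
`∇ℓ(s⋆(θ)) + ∇²ₛE(s⋆(θ), θ)·λ⋆(θ) = 0`, then
`d_θ C(θ) = (∂²_{s,θ}E(s⋆(θ), θ))ᵀ · λ⋆(θ)` for `C(θ) := ℓ(s⋆(θ))`. -/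
theorem stmt_2 {n p : ℕ}
    (E : Euc n → Euc p → ℝ)
    (hE : ContDiff ℝ 2 (Function.uncurry E))
    (V : Set (Euc p)) (hV : IsOpen V)
    (sstar : Euc p → Euc n) (hs : ContDiff ℝ 1 sstar)
    (hcrit : ∀ θ ∈ V, gradient (fun s => E s θ) (sstar θ) = 0)
    (ℓ : Euc n → ℝ) (hℓ : Differentiable ℝ ℓ)
    (lam : Euc p → Euc n)
    (hlam : ∀ θ ∈ V, gradient ℓ (sstar θ) +
      (fderiv ℝ (fun s => gradient (fun s' => E s' θ) s) (sstar θ)) (lam θ) = 0)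
    (θ : Euc p) (hθ : θ ∈ V) :
    gradient (fun θ' => ℓ (sstar θ')) θ =
      (ContinuousLinearMap.adjoint
        (fderiv ℝ (fun θ' => gradient (fun s => E s θ') (sstar θ)) θ)) (lam θ) := by
  set H := fderiv ℝ (fun s => gradient (fun s' => E s' θ) s) (sstar θ)
  have hsθ : DifferentiableAt ℝ sstar θ := hs.differentiable one_ne_zero θ
  have hmixed : fderiv ℝ (fun θ' => gradient (fun s => E s θ') (sstar θ)) θ
      = -(H ∘L fderiv ℝ sstar θ) :=
    eq_neg_of_add_eq_zero_right <| fderiv_left_comp_add_fderiv_right_eq_zero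
      (Φ := fun s θ' => gradient (fun s' => E s' θ') s)
      ((contDiff_gradient_left (n := 1) hE).differentiable one_ne_zero _) hsθ
      (eventually_of_mem (hV.mem_nhds hθ) hcrit)
  have hH : IsSelfAdjoint H :=
    (hE.comp (contDiff_id.prodMk contDiff_const)).contDiffAt.isSelfAdjoint_fderiv_gradient
  rw [gradient_comp (hℓ _) hsθ, hmixed, eq_neg_of_add_eq_zero_left (hlam θ hθ), map_neg, map_neg,
    adjoint_comp, hH.adjoint_eq]
  rfl
end
end

section
/- Let E : ℝⁿ × ℝᵖ → ℝ be twice continuously differentiable, ℓ : ℝⁿ → ℝ twice continuously differentiable, and suppose for each nudging strength β in a neighborhood of 0 there is a continuously differentiable family s_β ∈ ℝⁿ solving the nudged stationarity condition ∇ₛE(s_β, θ) + β∇ℓ(s_β) = 0, with ∇²ₛE(s₀, θ) invertible. Then the derivative λ := d/dβ s_β |_{β=0} satisfies the adjoint equation ∇ℓ(s₀) + ∇²ₛE(s₀, θ) · λ = 0, and consequently λ = −(∇²ₛE(s₀, θ))⁻¹ ∇ℓ(s₀). -/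
/-!
Differentiate the stationarity condition `∇ₛE(s_β, θ) + β ∇ℓ(s_β) = 0` at `β = 0`: the chain rule
turns the first term into `H λ`, and thanks to the factor `β` the second has derivative `∇ℓ(s₀)`
using only continuity of `β ↦ ∇ℓ(s_β)`. Hence `∇ℓ(s₀) + H λ = 0`, and a left inverse of `H`
gives `λ`.
-/

open scoped RealInnerProductSpace

noncomputable section

open Filter Topology

theorem ContDiff.gradient {F : Type*} [NormedAddCommGroup F] [InnerProductSpace ℝ F]
    [CompleteSpace F] {f : F → ℝ} {k : WithTop ℕ∞} (hf : ContDiff ℝ (k + 1) f) :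
    ContDiff ℝ k (gradient f) :=
  (InnerProductSpace.toDual ℝ F).symm.contDiff.comp (hf.fderiv_right le_rfl)

theorem hasDerivAt_smul_self_zero {𝕜 F : Type*} [NontriviallyNormedField 𝕜]
    [NormedAddCommGroup F] [NormedSpace 𝕜 F] {g : 𝕜 → F} (hg : ContinuousAt g 0) :
    HasDerivAt (fun t => t • g t) (g 0) 0 := by
  rw [hasDerivAt_iff_tendsto_slope]
  refine (hg.tendsto.mono_left nhdsWithin_le_nhds).congr' ?_
  filter_upwards [self_mem_nhdsWithin] with t ht
  rw [slope_def_module, zero_smul, sub_zero, sub_zero, smul_smul, inv_mul_cancel₀ ht, one_smul]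

theorem HasFDerivAt.add_apply_eq_zero_of_eventually_add_smul_eq_zero
    {𝕜 E F : Type*} [NontriviallyNormedField 𝕜] [NormedAddCommGroup E] [NormedSpace 𝕜 E]
    [NormedAddCommGroup F] [NormedSpace 𝕜 F] {G g : E → F} {H : E →L[𝕜] F} {s : 𝕜 → E} {v : E}
    (hG : HasFDerivAt G H (s 0)) (hg : ContinuousAt g (s 0)) (hs : HasDerivAt s v 0)
    (hzero : ∀ᶠ t in 𝓝 0, G (s t) + t • g (s t) = 0) :
    g (s 0) + H v = 0 := by
  have hsum : HasDerivAt (fun t => G (s t) + t • g (s t)) (H v + g (s 0)) 0 :=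
    (hG.comp_hasDerivAt 0 hs).add (hasDerivAt_smul_self_zero (hg.comp hs.continuousAt))
  have hconst : HasDerivAt (fun t => G (s t) + t • g (s t)) 0 0 :=
    (hasDerivAt_const (0 : 𝕜) (0 : F)).congr_of_eventuallyEq hzero
  rw [add_comm]
  exact hsum.unique hconst

theorem stmt_3_general {n p : ℕ}
    (E : Euc n → Euc p → ℝ) (hE : ContDiff ℝ 2 (Function.uncurry E))
    (ℓ : Euc n → ℝ) (hℓ : ContDiff ℝ 2 ℓ)
    (θ : Euc p) (s : ℝ → Euc n) (hs : ContDiff ℝ 1 s)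
    (ε : ℝ) (hε : 0 < ε)
    (hnudge : ∀ β ∈ Set.Ioo (-ε) ε,
      gradient (fun s' => E s' θ) (s β) + β • gradient ℓ (s β) = 0)
    (H : Euc n →L[ℝ] Euc n)
    (hH : H = fderiv ℝ (fun s' => gradient (fun s'' => E s'' θ) s') (s 0))
    (Hinv : Euc n →L[ℝ] Euc n)
    (hHinv₁ : Hinv.comp H = ContinuousLinearMap.id ℝ (Euc n)) :
    gradient ℓ (s 0) + H (deriv s 0) = 0 ∧
      deriv s 0 = -(Hinv (gradient ℓ (s 0))) := by
  have hEθ : ContDiff ℝ (1 + 1) (fun s' => E s' θ) :=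
    hE.comp (contDiff_id.prodMk contDiff_const)
  have hG : HasFDerivAt (gradient fun s' => E s' θ) H (s 0) :=
    hH ▸ (hEθ.gradient.differentiable one_ne_zero (s 0)).hasFDerivAt
  have hadjoint : gradient ℓ (s 0) + H (deriv s 0) = 0 :=
    hG.add_apply_eq_zero_of_eventually_add_smul_eq_zero
      (ContDiff.gradient (k := 1) hℓ).continuous.continuousAt
      (hs.differentiable one_ne_zero 0).hasDerivAt
      (eventually_of_mem (Ioo_mem_nhds (neg_neg_of_pos hε) hε) hnudge)
  refine ⟨hadjoint, ?_⟩
  calc deriv s 0 = Hinv (H (deriv s 0)) := by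
        rw [← ContinuousLinearMap.comp_apply, hHinv₁, ContinuousLinearMap.id_apply]
    _ = -Hinv (gradient ℓ (s 0)) := by
        rw [eq_neg_of_add_eq_zero_right hadjoint, map_neg]

/-- The β-derivative of the nudged equilibrium `s_β`
(solving `∇ₛE(s_β, θ) + β∇ℓ(s_β) = 0`) satisfies the adjoint equation
`∇ℓ(s₀) + ∇²ₛE(s₀, θ)·λ = 0`, hence `λ = −(∇²ₛE(s₀, θ))⁻¹∇ℓ(s₀)`. -/
theorem stmt_3 {n p : ℕ}
    (E : Euc n → Euc p → ℝ) (hE : ContDiff ℝ 2 (Function.uncurry E))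
    (ℓ : Euc n → ℝ) (hℓ : ContDiff ℝ 2 ℓ)
    (θ : Euc p) (s : ℝ → Euc n) (hs : ContDiff ℝ 1 s)
    (ε : ℝ) (hε : 0 < ε)
    (hnudge : ∀ β ∈ Set.Ioo (-ε) ε,
      gradient (fun s' => E s' θ) (s β) + β • gradient ℓ (s β) = 0)
    (H : Euc n →L[ℝ] Euc n)
    (hH : H = fderiv ℝ (fun s' => gradient (fun s'' => E s'' θ) s') (s 0))
    (Hinv : Euc n →L[ℝ] Euc n)
    (hHinv₁ : Hinv.comp H = ContinuousLinearMap.id ℝ (Euc n))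
    (hHinv₂ : H.comp Hinv = ContinuousLinearMap.id ℝ (Euc n)) :
    gradient ℓ (s 0) + H (deriv s 0) = 0 ∧
      deriv s 0 = -(Hinv (gradient ℓ (s 0))) :=
  stmt_3_general E hE ℓ hℓ θ s hs ε hε hnudge H hH Hinv hHinv₁
end
end

section
/- Under the hypotheses of the previous statement (nudged equilibria s_β solving ∇ₛE(s_β, θ) + β∇ℓ(s_β) = 0, with β ↦ s_β differentiable at 0 and ∇²ₛE(s₀, θ) invertible), the equilibrium-propagation gradient estimate converges to the true loss gradient: d/dβ [∇_θ E(s_β, θ)] |_{β=0} = d_θ ℓ(s⋆(θ)), where s⋆(θ) := s₀ is the free equilibrium depending implicitly on θ via the implicit function theorem. -/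
/-!
Let `H` be the Hessian of `(s, θ) ↦ E s θ` at `(s⋆ θ, θ)`, `J = D s⋆(θ)` and `ṡ = s'(0)`.
Differentiating the free equilibrium condition `∂ₛE(s⋆ θ', θ') = 0` in `θ'` gives
`H (J u, u) (v, 0) = 0`, and differentiating the nudged condition
`∂ₛE(s β, θ) + β ∇ℓ(s β) = 0` at `β = 0` gives `H (ṡ, 0) (w, 0) = -Dℓ(s⋆ θ) w`.
Paired with `u`, the left-hand side is `H (ṡ, 0) (0, u)`, which by symmetry of `H` equals
`H (J u, u) (ṡ, 0) - H (ṡ, 0) (J u, 0) = Dℓ(s⋆ θ) (J u)`, the right-hand side paired with `u`.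
-/

open scoped RealInnerProductSpace

noncomputable section

open scoped Topology
open Filter Function InnerProductSpace ContinuousLinearMap

section Normed

variable {X Y G : Type*} [NormedAddCommGroup X] [NormedSpace ℝ X]
  [NormedAddCommGroup Y] [NormedSpace ℝ Y] [NormedAddCommGroup G] [NormedSpace ℝ G]

theorem hasDerivAt_smul_self_of_continuousAt {g : ℝ → G} (hg : ContinuousAt g 0) :
    HasDerivAt (fun β => β • g β) (g 0) 0 := by
  rw [hasDerivAt_iff_tendsto_slope]
  refine (hg.tendsto.mono_left nhdsWithin_le_nhds).congr' ?_
  filter_upwards [self_mem_nhdsWithin] with β hβ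
  rw [slope_def_module, zero_smul, sub_zero, sub_zero, smul_smul, inv_mul_cancel₀ hβ, one_smul]

theorem fderiv_uncurry_apply_left {E : X → Y → G} {a : X} {b : Y}
    (h : DifferentiableAt ℝ (uncurry E) (a, b)) (v : X) :
    fderiv ℝ (fun x => E x b) a v = fderiv ℝ (uncurry E) (a, b) (v, 0) := by
  rw [show (fun x => E x b) = uncurry E ∘ fun x => (x, b) from rfl,
    (h.hasFDerivAt.comp a (hasFDerivAt_prodMk_left a b)).fderiv]
  rfl

theorem fderiv_uncurry_apply_right {E : X → Y → G} {a : X} {b : Y}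
    (h : DifferentiableAt ℝ (uncurry E) (a, b)) (u : Y) :
    fderiv ℝ (fun y => E a y) b u = fderiv ℝ (uncurry E) (a, b) (0, u) := by
  rw [show (fun y => E a y) = uncurry E ∘ fun y => (a, y) from rfl,
    (h.hasFDerivAt.comp b (hasFDerivAt_prodMk_right a b)).fderiv]
  rfl

theorem hasDerivAt_comp_prodMk_const {Φ : X × Y → G} {γ : ℝ → X} {θ : Y} {t : ℝ}
    (hΦ : DifferentiableAt ℝ Φ (γ t, θ)) (hγ : DifferentiableAt ℝ γ t) :
    HasDerivAt (fun β => Φ (γ β, θ)) (fderiv ℝ Φ (γ t, θ) (deriv γ t, 0)) t :=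
  hΦ.hasFDerivAt.comp_hasDerivAt t (hγ.hasDerivAt.prodMk (hasDerivAt_const t θ))

end Normed

theorem fderiv_fderiv_uncurry_apply_eq_zero_of_free {X Y : Type*} [NormedAddCommGroup X]
    [InnerProductSpace ℝ X] [CompleteSpace X] [NormedAddCommGroup Y] [NormedSpace ℝ Y]
    {E : X → Y → ℝ} {sstar : Y → X} {θ : Y} (hF : Differentiable ℝ (uncurry E))
    (hF' : DifferentiableAt ℝ (fderiv ℝ (uncurry E)) (sstar θ, θ))
    (hsstar : DifferentiableAt ℝ sstar θ)
    (hfree : ∀ᶠ θ' in 𝓝 θ, gradient (fun x => E x θ') (sstar θ') = 0) (u : Y) (v : X) :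
    fderiv ℝ (fderiv ℝ (uncurry E)) (sstar θ, θ) (fderiv ℝ sstar θ u, u) (v, 0) = 0 := by
  have hpath : HasFDerivAt (fun θ' => (sstar θ', θ'))
      ((fderiv ℝ sstar θ).prod (ContinuousLinearMap.id ℝ Y)) θ :=
    hsstar.hasFDerivAt.prodMk (hasFDerivAt_id θ)
  have hD := (apply ℝ ℝ ((v, 0) : X × Y)).hasFDerivAt.comp θ (hF'.hasFDerivAt.comp θ hpath)
  have hzero : (fun θ' => fderiv ℝ (uncurry E) (sstar θ', θ') (v, 0)) =ᶠ[𝓝 θ] fun _ => 0 := by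
    filter_upwards [hfree] with θ' h
    rw [← fderiv_uncurry_apply_left (hF _), ← inner_gradient_left, h, inner_zero_left]
  have := congrArg (· u) (hD.unique ((hasFDerivAt_const 0 θ).congr_of_eventuallyEq hzero))
  simpa using this

theorem fderiv_fderiv_uncurry_apply_add_eq_zero_of_nudged {X Y : Type*} [NormedAddCommGroup X]
    [InnerProductSpace ℝ X] [CompleteSpace X] [NormedAddCommGroup Y] [NormedSpace ℝ Y]
    {E : X → Y → ℝ} {ℓ : X → ℝ} {s : ℝ → X} {θ : Y} (hF : Differentiable ℝ (uncurry E))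
    (hF' : DifferentiableAt ℝ (fderiv ℝ (uncurry E)) (s 0, θ))
    (hℓ : ContinuousAt (fderiv ℝ ℓ) (s 0)) (hs : DifferentiableAt ℝ s 0)
    (hnudge : ∀ᶠ β in 𝓝 0, gradient (fun x => E x θ) (s β) + β • gradient ℓ (s β) = 0)
    (w : X) :
    fderiv ℝ (fderiv ℝ (uncurry E)) (s 0, θ) (deriv s 0, 0) (w, 0) + fderiv ℝ ℓ (s 0) w = 0 := by
  have hDE : HasDerivAt (fun β => fderiv ℝ (uncurry E) (s β, θ) (w, 0))
      (fderiv ℝ (fderiv ℝ (uncurry E)) (s 0, θ) (deriv s 0, 0) (w, 0)) 0 :=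
    (apply ℝ ℝ ((w, 0) : X × Y)).hasFDerivAt.comp_hasDerivAt 0
      (hasDerivAt_comp_prodMk_const hF' hs)
  have hDℓ : HasDerivAt (fun β => β • fderiv ℝ ℓ (s β) w) (fderiv ℝ ℓ (s 0) w) 0 :=
    hasDerivAt_smul_self_of_continuousAt
      ((apply ℝ ℝ w).continuous.continuousAt.comp (hℓ.comp hs.continuousAt))
  have hzero : (fun β => fderiv ℝ (uncurry E) (s β, θ) (w, 0) + β • fderiv ℝ ℓ (s β) w)
      =ᶠ[𝓝 0] fun _ => 0 := by
    filter_upwards [hnudge] with β h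
    have := congrArg (⟪·, w⟫) h
    simpa only [inner_add_left, inner_smul_left, inner_gradient_left, inner_zero_left,
      fderiv_uncurry_apply_left (hF _), conj_trivial, smul_eq_mul] using this
  exact (hDE.add hDℓ).unique ((hasDerivAt_const 0 (0 : ℝ)).congr_of_eventuallyEq hzero)

theorem inner_deriv_gradient_uncurry_right {X Y : Type*} [NormedAddCommGroup X]
    [NormedSpace ℝ X] [NormedAddCommGroup Y] [InnerProductSpace ℝ Y] [CompleteSpace Y]
    {E : X → Y → ℝ} {γ : ℝ → X} {θ : Y} {t : ℝ} (hF : Differentiable ℝ (uncurry E))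
    (hF' : DifferentiableAt ℝ (fderiv ℝ (uncurry E)) (γ t, θ)) (hγ : DifferentiableAt ℝ γ t)
    (u : Y) :
    ⟪deriv (fun β => gradient (fun y => E (γ β) y) θ) t, u⟫ =
      fderiv ℝ (fderiv ℝ (uncurry E)) (γ t, θ) (deriv γ t, 0) (0, u) := by
  -- `∇_θ E` is the image of `D E` under the continuous linear map `L ↦ (toDual)⁻¹ (L ∘ inr)`.
  let T : StrongDual ℝ (X × Y) →L[ℝ] Y :=
    (toDual ℝ Y).symm.toContinuousLinearEquiv.toContinuousLinearMap ∘L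
      (compL ℝ Y (X × Y) ℝ).flip (inr ℝ X Y)
  have hT : (fun β => gradient (fun y => E (γ β) y) θ) =
      fun β => T (fderiv ℝ (uncurry E) (γ β, θ)) := by
    funext β
    refine ext_inner_right ℝ fun u => ?_
    simp [T, inner_gradient_left, fderiv_uncurry_apply_right (hF _)]
  have hD : HasDerivAt (fun β => T (fderiv ℝ (uncurry E) (γ β, θ))) _ t :=
    T.hasFDerivAt.comp_hasDerivAt t (hasDerivAt_comp_prodMk_const hF' hγ)
  rw [hT, hD.deriv]
  simp [T]

theorem stmt_4_general {n p : ℕ}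
    (E : Euc n → Euc p → ℝ) (hE : ContDiff ℝ 2 (Function.uncurry E))
    (ℓ : Euc n → ℝ) (hℓ : ContDiff ℝ 2 ℓ)
    (θ : Euc p)
    (sstar : Euc p → Euc n) (hsstar : ContDiff ℝ 1 sstar)
    (V : Set (Euc p)) (hV : IsOpen V) (hθV : θ ∈ V)
    (hfree : ∀ θ' ∈ V, gradient (fun s' => E s' θ') (sstar θ') = 0)
    (s : ℝ → Euc n) (hs : ContDiff ℝ 1 s) (hs0 : s 0 = sstar θ)
    (ε : ℝ) (hε : 0 < ε)
    (hnudge : ∀ β ∈ Set.Ioo (-ε) ε,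
      gradient (fun s' => E s' θ) (s β) + β • gradient ℓ (s β) = 0) :
    deriv (fun β => gradient (fun θ' => E (s β) θ') θ) 0 =
      gradient (fun θ' => ℓ (sstar θ')) θ := by
  have hF : Differentiable ℝ (uncurry E) := hE.differentiable two_ne_zero
  have hF' : Differentiable ℝ (fderiv ℝ (uncurry E)) :=
    (hE.fderiv_right (m := 1) le_rfl).differentiable one_ne_zero
  have hsym : IsSymmSndFDerivAt ℝ (uncurry E) (sstar θ, θ) :=
    hE.contDiffAt.isSymmSndFDerivAt (by simp)
  have hsstar' : DifferentiableAt ℝ sstar θ := hsstar.differentiable one_ne_zero θ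
  have hs' : DifferentiableAt ℝ s 0 := hs.differentiable one_ne_zero 0
  have hfree' := fderiv_fderiv_uncurry_apply_eq_zero_of_free hF (hF' _) hsstar'
    (eventually_of_mem (hV.mem_nhds hθV) hfree)
  have hnudge' := fderiv_fderiv_uncurry_apply_add_eq_zero_of_nudged hF (hF' _)
    (hℓ.continuous_fderiv two_ne_zero).continuousAt hs'
    (eventually_of_mem (Ioo_mem_nhds (neg_neg_of_pos hε) hε) hnudge)
  rw [hs0] at hnudge'
  set B := fderiv ℝ (fderiv ℝ (uncurry E)) (sstar θ, θ)
  set J := fderiv ℝ sstar θ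
  refine ext_inner_right ℝ fun u => ?_
  rw [inner_deriv_gradient_uncurry_right hF (hF' _) hs', inner_gradient_left,
    fderiv_fun_comp θ (hℓ.differentiable two_ne_zero _) hsstar', hs0]
  calc B (deriv s 0, 0) (0, u) = B (0, u) (deriv s 0, 0) := hsym.eq _ _
    _ = B (J u, u) (deriv s 0, 0) - B (J u, 0) (deriv s 0, 0) := by
        rw [← sub_apply, ← map_sub, Prod.mk_sub_mk, sub_self, sub_zero]
    _ = -B (deriv s 0, 0) (J u, 0) := by rw [hfree' u, hsym.eq]; ring
    _ = fderiv ℝ ℓ (sstar θ) (J u) := by linarith [hnudge' (J u)]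

/-- Fundamental theorem of Equilibrium Propagation: the EP gradient
estimate converges to the true loss gradient,
`d/dβ [∇_θ E(s_β, θ)]|_{β=0} = d_θ ℓ(s⋆(θ))`. -/
theorem stmt_4 {n p : ℕ}
    (E : Euc n → Euc p → ℝ) (hE : ContDiff ℝ 2 (Function.uncurry E))
    (ℓ : Euc n → ℝ) (hℓ : ContDiff ℝ 2 ℓ)
    (θ : Euc p)
    (sstar : Euc p → Euc n) (hsstar : ContDiff ℝ 1 sstar)
    (V : Set (Euc p)) (hV : IsOpen V) (hθV : θ ∈ V)
    (hfree : ∀ θ' ∈ V, gradient (fun s' => E s' θ') (sstar θ') = 0)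
    (s : ℝ → Euc n) (hs : ContDiff ℝ 1 s) (hs0 : s 0 = sstar θ)
    (ε : ℝ) (hε : 0 < ε)
    (hnudge : ∀ β ∈ Set.Ioo (-ε) ε,
      gradient (fun s' => E s' θ) (s β) + β • gradient ℓ (s β) = 0)
    (hHinv : Function.Bijective
      (fderiv ℝ (fun s' => gradient (fun s'' => E s'' θ) s') (sstar θ))) :
    deriv (fun β => gradient (fun θ' => E (s β) θ') θ) 0 =
      gradient (fun θ' => ℓ (sstar θ')) θ :=
  stmt_4_general E hE ℓ hℓ θ sstar hsstar V hV hθV hfree s hs hs0 ε hε hnudge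
end
end

section
/- Let F : ℝⁿ × ℝ^q → ℝ^m be differentiable, E(s, θ, x) twice continuously differentiable, Ẽ(s, θ, u, ω) := E(s, θ, F(u, ω)), and let s_β solve ∇ₛE(s_β, θ, x⋆) + β δ = 0 with x⋆ := F(u⋆, ω), β ↦ s_β differentiable at 0. Define Δx := d/dβ [∇_x E(s_β, θ, x⋆)]|_{β=0}. Then d/dβ [∇_u Ẽ(s_β, θ, u⋆, ω)]|_{β=0} = (∂_u F(u⋆, ω))ᵀ · Δx and d/dβ [∇_ω Ẽ(s_β, θ, u⋆, ω)]|_{β=0} = (∂_ω F(u⋆, ω))ᵀ · Δx. -/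
/-!
The gradient of `g ∘ f` is the adjoint of `Df` applied to the gradient of `g`. With
`g = E (s β) θ` and `f` a slice of `F`, this writes `∇_u Ẽ(s_β, θ, u⋆, ω)` as the fixed
continuous linear map `(∂_u F)ᵀ` applied to `∇_x E(s_β, θ, x⋆)`, so it commutes with `d/dβ`.
That the latter gradient is differentiable in `β` comes from `E` being `C²`.
-/

open scoped RealInnerProductSpace

noncomputable section

section GradientChainRule

variable {U X : Type*} [NormedAddCommGroup U] [InnerProductSpace ℝ U] [CompleteSpace U]
  [NormedAddCommGroup X] [InnerProductSpace ℝ X] [CompleteSpace X]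

theorem HasGradientAt.comp_hasFDerivAt {g : X → ℝ} {g' : X} {f : U → X} {f' : U →L[ℝ] X}
    {u : U} (hg : HasGradientAt g g' (f u)) (hf : HasFDerivAt f f' u) :
    HasGradientAt (g ∘ f) (f'.adjoint g') u := by
  have hdual : InnerProductSpace.toDual ℝ U (f'.adjoint g') =
      (InnerProductSpace.toDual ℝ X g').comp f' := by
    ext v
    simp [ContinuousLinearMap.adjoint_inner_left]
  rw [hasGradientAt_iff_hasFDerivAt, hdual]
  exact hg.hasFDerivAt.comp u hf

theorem gradient_comp_s7 {g : X → ℝ} {f : U → X} {u : U} (hg : DifferentiableAt ℝ g (f u))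
    (hf : DifferentiableAt ℝ f u) :
    gradient (g ∘ f) u = (fderiv ℝ f u).adjoint (gradient g (f u)) :=
  (hg.hasGradientAt.comp_hasFDerivAt hf.hasFDerivAt).gradient

theorem deriv_gradient_comp {g : ℝ → X → ℝ} {f : U → X} {u : U} {β₀ : ℝ}
    (hg : ∀ β, DifferentiableAt ℝ (g β) (f u)) (hf : DifferentiableAt ℝ f u)
    (hβ : DifferentiableAt ℝ (fun β => gradient (g β) (f u)) β₀) :
    deriv (fun β => gradient (fun u' => g β (f u')) u) β₀ =
      (fderiv ℝ f u).adjoint (deriv (fun β => gradient (g β) (f u)) β₀) := by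
  have hchain : (fun β => gradient (fun u' => g β (f u')) u) =
      fun β => (fderiv ℝ f u).adjoint (gradient (g β) (f u)) :=
    funext fun β => gradient_comp_s7 (hg β) hf
  rw [hchain]
  exact ((fderiv ℝ f u).adjoint.hasFDerivAt.comp_hasDerivAt β₀ hβ.hasDerivAt).deriv

end GradientChainRule

theorem differentiable_gradient_prodMk_right {X Y : Type*}
    [NormedAddCommGroup X] [NormedSpace ℝ X]
    [NormedAddCommGroup Y] [InnerProductSpace ℝ Y] [CompleteSpace Y] {Φ : X × Y → ℝ}
    (hΦ : ContDiff ℝ 2 Φ) (y : Y) :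
    Differentiable ℝ fun x => gradient (fun y' => Φ (x, y')) y := by
  have hpartial : ∀ x, gradient (fun y' => Φ (x, y')) y =
      (InnerProductSpace.toDual ℝ Y).symm ((fderiv ℝ Φ (x, y)).comp (.inr ℝ X Y)) := fun x =>
    (((hΦ.differentiable two_ne_zero (x, y)).hasFDerivAt.comp y
      (hasFDerivAt_prodMk_right x y)).hasGradientAt).gradient
  have hfderiv : Differentiable ℝ (fderiv ℝ Φ) :=
    (hΦ.fderiv_right (m := 1) le_rfl).differentiable one_ne_zero
  simp only [hpartial]
  exact (InnerProductSpace.toDual ℝ Y).symm.differentiable.comp (by fun_prop)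

theorem stmt_7_general {n q m p : ℕ}
    (F : Euc n → Euc q → Euc m)
    (hF : Differentiable ℝ (Function.uncurry F))
    (E : Euc m → Euc p → Euc m → ℝ)
    (hE : ContDiff ℝ 2 (fun t : Euc m × Euc p × Euc m => E t.1 t.2.1 t.2.2))
    (θ : Euc p) (ustar : Euc n) (ω : Euc q)
    (xstar : Euc m) (hx : xstar = F ustar ω)
    (s : ℝ → Euc m) (hs : DifferentiableAt ℝ s 0)
    (Δx : Euc m)
    (hΔx : Δx = deriv (fun β => gradient (fun x => E (s β) θ x) xstar) 0) :
    deriv (fun β => gradient (fun u => E (s β) θ (F u ω)) ustar) 0 =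
      (ContinuousLinearMap.adjoint (fderiv ℝ (fun u => F u ω) ustar)) Δx ∧
    deriv (fun β => gradient (fun ω' => E (s β) θ (F ustar ω')) ω) 0 =
      (ContinuousLinearMap.adjoint (fderiv ℝ (fun ω' => F ustar ω') ω)) Δx := by
  subst hx hΔx
  have hEθ : ContDiff ℝ 2 fun t : Euc m × Euc m => E t.1 θ t.2 :=
    hE.comp (contDiff_fst.prodMk (contDiff_const.prodMk contDiff_snd))
  have hEslice : ∀ a x, DifferentiableAt ℝ (E a θ) x := fun a x =>
    (hEθ.differentiable two_ne_zero).comp ((differentiable_const a).prodMk differentiable_id) x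
  have hgrad_x : DifferentiableAt ℝ (fun β => gradient (E (s β) θ) (F ustar ω)) 0 :=
    (differentiable_gradient_prodMk_right hEθ _ _).comp 0 hs
  exact ⟨deriv_gradient_comp (fun β => hEslice _ _)
      (hF.comp (differentiable_id.prodMk (differentiable_const ω))).differentiableAt hgrad_x,
    deriv_gradient_comp (fun β => hEslice _ _)
      (hF.comp ((differentiable_const ustar).prodMk differentiable_id)).differentiableAt hgrad_x⟩

/-- Implicit BP-EP chaining: with `Δx := d/dβ[∇_x E(s_β,θ,x⋆)]|₀`,
`d/dβ[∇_u Ẽ(s_β,θ,u⋆,ω)]|₀ = (∂_u F(u⋆,ω))ᵀ·Δx` and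
`d/dβ[∇_ω Ẽ(s_β,θ,u⋆,ω)]|₀ = (∂_ω F(u⋆,ω))ᵀ·Δx`. -/
theorem stmt_7 {n q m p : ℕ}
    (F : Euc n → Euc q → Euc m)
    (hF : Differentiable ℝ (Function.uncurry F))
    (E : Euc m → Euc p → Euc m → ℝ)
    (hE : ContDiff ℝ 2 (fun t : Euc m × Euc p × Euc m => E t.1 t.2.1 t.2.2))
    (θ : Euc p) (ustar : Euc n) (ω : Euc q) (δ : Euc m)
    (xstar : Euc m) (hx : xstar = F ustar ω)
    (s : ℝ → Euc m) (hs : DifferentiableAt ℝ s 0)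
    (ε : ℝ) (hε : 0 < ε)
    (hnudge : ∀ β ∈ Set.Ioo (-ε) ε,
      gradient (fun s' => E s' θ xstar) (s β) + β • δ = 0)
    (Δx : Euc m)
    (hΔx : Δx = deriv (fun β => gradient (fun x => E (s β) θ x) xstar) 0) :
    deriv (fun β => gradient (fun u => E (s β) θ (F u ω)) ustar) 0 =
      (ContinuousLinearMap.adjoint (fderiv ℝ (fun u => F u ω) ustar)) Δx ∧
    deriv (fun β => gradient (fun ω' => E (s β) θ (F ustar ω')) ω) 0 =
      (ContinuousLinearMap.adjoint (fderiv ℝ (fun ω' => F ustar ω') ω)) Δx :=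
  stmt_7_general F hF E hE θ ustar ω xstar hx s hs Δx hΔx
end
end

section
/- Single-layer EP error signal equals backprop error signal: let σ : ℝⁿ → ℝⁿ be differentiable, E(s, x) := G(s) − ⟪s, x⟫ with ∇G = σ⁻¹, and for δ ∈ ℝⁿ let s_β := σ(x − βδ) (which solves ∇ₛE(s_β, x) + βδ = 0). Then Δx := d/dβ [∇_x E(s_β, x)]|_{β=0} = −d/dβ s_β |_{β=0} = Dσ(x) · δ, where Dσ(x) is the Jacobian of σ at x. In particular, if σ acts coordinatewise, Δx = σ'(x) ⊙ δ. -/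
open scoped RealInnerProductSpace

noncomputable section

theorem hasGradientAt_const_sub_inner {F : Type*} [NormedAddCommGroup F]
    [InnerProductSpace ℝ F] [CompleteSpace F] (a : ℝ) (c x : F) :
    HasGradientAt (fun y => a - ⟪c, y⟫) (-c) x := by
  have hinner : HasFDerivAt (fun y => ⟪c, y⟫) (InnerProductSpace.toDual ℝ F c) x :=
    (innerSL ℝ c).hasFDerivAt
  rw [hasGradientAt_iff_hasFDerivAt, map_neg]
  exact hinner.const_sub a

theorem HasFDerivAt.hasDerivAt_sub_smul {𝕜 E F : Type*} [NontriviallyNormedField 𝕜]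
    [NormedAddCommGroup E] [NormedSpace 𝕜 E] [NormedAddCommGroup F] [NormedSpace 𝕜 F]
    {f : E → F} {f' : E →L[𝕜] F} {x : E} (hf : HasFDerivAt f f' x) (v : E) :
    HasDerivAt (fun t : 𝕜 => f (x - t • v)) (-f' v) 0 := by
  have hline : HasDerivAt (fun t : 𝕜 => x - t • v) (-v) 0 := by
    simpa using ((hasDerivAt_id (0 : 𝕜)).smul_const v).const_sub x
  rw [← map_neg]
  exact (by simpa using hf : HasFDerivAt f f' (x - (0 : 𝕜) • v)).comp_hasDerivAt 0 hline

theorem stmt_8_general {n : ℕ}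
    (σ : Euc n → Euc n) (hσ : Differentiable ℝ σ)
    (G : Euc n → ℝ)
    (E : Euc n → Euc n → ℝ) (hE : ∀ s x, E s x = G s - ⟪s, x⟫)
    (x δ : Euc n)
    (s : ℝ → Euc n) (hsdef : ∀ β, s β = σ (x - β • δ)) :
    deriv (fun β => gradient (fun x' => E (s β) x') x) 0 = -(deriv s 0) ∧
    deriv (fun β => gradient (fun x' => E (s β) x') x) 0 = (fderiv ℝ σ x) δ := by
  have hgrad_x : (fun β => gradient (fun x' => E (s β) x') x) = fun β => -s β := by
    funext β
    simp only [hE]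
    exact (hasGradientAt_const_sub_inner _ _ _).gradient
  have hds : deriv s 0 = -fderiv ℝ σ x δ := by
    rw [funext hsdef]
    exact ((hσ x).hasFDerivAt.hasDerivAt_sub_smul δ).deriv
  rw [hgrad_x, deriv.fun_neg, hds, neg_neg]
  exact ⟨rfl, rfl⟩

/-- Single-layer EP error signal equals the backprop error signal:
for `E(s,x) = G(s) − ⟪s,x⟫`, `∇G = σ⁻¹`, and `s_β = σ(x − βδ)`,
`Δx := d/dβ[∇_x E(s_β,x)]|₀ = −d/dβ s_β|₀ = Dσ(x)·δ`. -/
theorem stmt_8 {n : ℕ}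
    (σ : Euc n → Euc n) (hσ : Differentiable ℝ σ)
    (G : Euc n → ℝ) (hG : Differentiable ℝ G)
    (hσ₁ : Function.LeftInverse σ (gradient G))
    (hσ₂ : Function.RightInverse σ (gradient G))
    (E : Euc n → Euc n → ℝ) (hE : ∀ s x, E s x = G s - ⟪s, x⟫)
    (x δ : Euc n)
    (s : ℝ → Euc n) (hsdef : ∀ β, s β = σ (x - β • δ)) :
    deriv (fun β => gradient (fun x' => E (s β) x') x) 0 = -(deriv s 0) ∧
    deriv (fun β => gradient (fun x' => E (s β) x') x) 0 = (fderiv ℝ σ x) δ :=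
  stmt_8_general σ hσ G E hE x δ s hsdef
end
end

section
/- Gradient of the multilevel objective via Lagrange multipliers: under the setting of the previous statement, suppose additionally that the equilibrium states s^k⋆ depend differentiably on the parameters W = (θ¹,…,θ^{N−1}, ω¹,…,ω^{N−1}) and that (s⋆, λ⋆) satisfies both stationarity conditions of the Lagrangian. Then the total derivative of C(W) := ℓ(s^{N−1}⋆(W)) with respect to any parameter θ^k equals ∇²_{1,2}Ẽ^k(s^k⋆, θ^k, s^{k−1}⋆, ω^k) · λ⋆^k, and with respect to ω^k equals ∇²_{1,4}Ẽ^k(s^k⋆, θ^k, s^{k−1}⋆, ω^k) · λ⋆^k. -/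
open scoped RealInnerProductSpace

noncomputable section

/-!
Differentiating the stationarity conditions `∇₁Ẽʲ(sʲ, θʲ, sʲ⁻¹, ωʲ) = 0` in the direction `v`
of `θ^{k₀}` gives, for the tangent vectors `Dʲ = ∂sʲ/∂θ^{k₀} · v`, the linear system
`Hⱼ Dʲ + [j = k₀] ∇²₁₂Ẽ^{k₀} v + Bⱼ Dʲ⁻¹ = 0`, where `Hⱼ = ∇²₁₁Ẽʲ` is self-adjoint and
`Bⱼ = ∇²₁₃Ẽʲ`. Pairing the `j`-th equation with `λʲ`, the adjoint recursion
`B_{j+1}^* λʲ⁺¹ = -Hⱼ λʲ` makes the sum telescope, and the top condition `∇ℓ = -H_{N-1} λ^{N-1}`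
turns `⟪∇C, v⟫ = ⟪∇ℓ, D^{N-1}⟫` into `⟪λ^{k₀}, ∇²₁₂Ẽ^{k₀} v⟫`. The `ω`-derivative is the same
statement with the roles of the second and fourth arguments of `Ẽ` exchanged.
-/

open InnerProductSpace ContinuousLinearMap

section Calculus

variable {X Y Z : Type*}
  [NormedAddCommGroup Y] [NormedSpace ℝ Y] [NormedAddCommGroup Z] [NormedSpace ℝ Z]

theorem fderiv_apply_prod_eq_add [NormedAddCommGroup X] [NormedSpace ℝ X]
    {G : X × Y → Z} {x : X} {y : Y}
    (hG : DifferentiableAt ℝ G (x, y)) (a : X) (b : Y) :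
    fderiv ℝ G (x, y) (a, b) =
      fderiv ℝ (fun x' => G (x', y)) x a + fderiv ℝ (fun y' => G (x, y')) y b := by
  have hx : HasFDerivAt (fun x' => G (x', y)) (fderiv ℝ G (x, y) ∘L inl ℝ X Y) x :=
    hG.hasFDerivAt.comp x (hasFDerivAt_prodMk_left x y)
  have hy : HasFDerivAt (fun y' => G (x, y')) (fderiv ℝ G (x, y) ∘L inr ℝ X Y) y :=
    hG.hasFDerivAt.comp y (hasFDerivAt_prodMk_right x y)
  rw [hx.fderiv, hy.fderiv, comp_apply, comp_apply, inl_apply, inr_apply, ← map_add,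
    Prod.mk_add_mk, add_zero, zero_add]

variable [NormedAddCommGroup X] [InnerProductSpace ℝ X] [CompleteSpace X]

theorem contDiff_gradient_fst {F : X × Y → ℝ} (hF : ContDiff ℝ 2 F) :
    ContDiff ℝ 1 fun t : X × Y => gradient (fun s => F (s, t.2)) t.1 := by
  have hpartial : ∀ t : X × Y, fderiv ℝ (fun s => F (s, t.2)) t.1 = fderiv ℝ F t ∘L inl ℝ X Y :=
    fun t => ((hF.differentiable two_ne_zero t).hasFDerivAt.comp t.1
      (hasFDerivAt_prodMk_left t.1 t.2)).fderiv
  simp only [gradient, hpartial]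
  exact (toDual ℝ X).symm.contDiff.comp ((hF.fderiv_right le_rfl).clm_comp contDiff_const)

theorem isSelfAdjoint_fderiv_gradient {f : X → ℝ} {x : X} (hf : ContDiffAt ℝ 2 f x) :
    IsSelfAdjoint (fderiv ℝ (gradient f) x) := by
  have hsymm := hf.isSymmSndFDerivAt (by simp)
  let e : StrongDual ℝ X ≃ₗᵢ[ℝ] X := (toDual ℝ X).symm
  have hcomp : fderiv ℝ (gradient f) x = (e : StrongDual ℝ X →L[ℝ] X) ∘L
      fderiv ℝ (fderiv ℝ f) x :=
    e.comp_fderiv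
  refine isSelfAdjoint_iff_isSymmetric.mpr fun v w => ?_
  rw [real_inner_comm _ v]
  have he : ∀ (φ : StrongDual ℝ X) (u : X), ⟪e φ, u⟫ = φ u := fun _ _ => toDual_symm_apply
  simp only [coe_coe, hcomp, comp_apply, LinearIsometryEquiv.coe_coe'', he]
  exact hsymm v w

end Calculus

section Linearization

variable {X P U O R : Type*}
  [NormedAddCommGroup X] [InnerProductSpace ℝ X] [CompleteSpace X]
  [NormedAddCommGroup P] [NormedSpace ℝ P] [NormedAddCommGroup U] [NormedSpace ℝ U]
  [NormedAddCommGroup O] [NormedSpace ℝ O] [NormedAddCommGroup R] [NormedSpace ℝ R]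

theorem fderiv_gradient_add_eq_zero_of_gradient_eq_zero (F : X → P → U → O → ℝ)
    (hF : ContDiff ℝ 2 fun t : X × P × U × O => F t.1 t.2.1 t.2.2.1 t.2.2.2) (o : O)
    {σ : R → X} {π : R → P} {μ : R → U} {τ₀ : R}
    {Dσ : R →L[ℝ] X} {Dπ : R →L[ℝ] P} {Dμ : R →L[ℝ] U}
    (hσ : HasFDerivAt σ Dσ τ₀) (hπ : HasFDerivAt π Dπ τ₀) (hμ : HasFDerivAt μ Dμ τ₀)
    (hstat : ∀ τ, gradient (fun s => F s (π τ) (μ τ) o) (σ τ) = 0) (v : R) :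
    fderiv ℝ (gradient fun s => F s (π τ₀) (μ τ₀) o) (σ τ₀) (Dσ v) +
      fderiv ℝ (fun p => gradient (fun s => F s p (μ τ₀) o) (σ τ₀)) (π τ₀) (Dπ v) +
      fderiv ℝ (fun u => gradient (fun s => F s (π τ₀) u o) (σ τ₀)) (μ τ₀) (Dμ v) = 0 := by
  let G : X × P × U → X := fun t => gradient (fun s => F s t.2.1 t.2.2 o) t.1
  have hG : Differentiable ℝ G :=
    (contDiff_gradient_fst (F := fun t : X × P × U => F t.1 t.2.1 t.2.2 o)
      (hF.comp (f := fun t : X × P × U => (t.1, t.2.1, t.2.2, o)) (by fun_prop))).differentiable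
      one_ne_zero
  have hGσ : HasFDerivAt (fun τ => G (σ τ, π τ, μ τ))
      (fderiv ℝ G (σ τ₀, π τ₀, μ τ₀) ∘L Dσ.prod (Dπ.prod Dμ)) τ₀ :=
    (hG _).hasFDerivAt.comp τ₀ (hσ.prodMk (hπ.prodMk hμ))
  have hzero : fderiv ℝ G (σ τ₀, π τ₀, μ τ₀) (Dσ v, Dπ v, Dμ v) = 0 := by
    simp only [G, hstat] at hGσ
    exact congr($(hGσ.unique (hasFDerivAt_const 0 τ₀)) v)
  have hGy : DifferentiableAt ℝ (fun y : P × U => G (σ τ₀, y)) (π τ₀, μ τ₀) :=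
    (hG _).comp _ (hasFDerivAt_prodMk_right _ _).differentiableAt
  rw [fderiv_apply_prod_eq_add (hG _), fderiv_apply_prod_eq_add hGy, ← add_assoc] at hzero
  exact hzero

end Linearization

section AdjointMethod

theorem eq_neg_of_telescoping {m k₀ : ℕ} (hk₁ : 1 ≤ k₀) (hk₂ : k₀ ≤ m) (a b : ℕ → ℝ) (p : ℝ)
    (hstat : ∀ j, 1 ≤ j → j ≤ m → a j + (if j = k₀ then p else 0) + b j = 0)
    (hrec : ∀ j, 1 ≤ j → j < m → b (j + 1) = -a j) (hb₁ : b 1 = 0) :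
    a m = -p := by
  have key : ∀ i, 1 ≤ i → i ≤ m → a i = -(if k₀ ≤ i then p else 0) := by
    intro i hi
    induction i, hi using Nat.le_induction with
    | base =>
      intro hm
      have h := hstat 1 le_rfl hm
      rw [hb₁] at h
      split_ifs at h ⊢ <;> first | omega | linarith
    | succ i hi ih =>
      intro hm
      have h := hstat (i + 1) (by omega) hm
      rw [hrec i hi (by omega), ih (by omega)] at h
      split_ifs at h ⊢ <;> first | omega | linarith
  rw [key m (by omega) le_rfl, if_pos hk₂]

variable {E : ℕ → Type*} [∀ j, NormedAddCommGroup (E j)] [∀ j, InnerProductSpace ℝ (E j)]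
  [∀ j, CompleteSpace (E j)]

theorem inner_eq_inner_of_adjoint_recursion {N k₀ : ℕ} (hk₁ : 1 ≤ k₀) (hk₂ : k₀ ≤ N - 1)
    (H : ∀ j, E j →L[ℝ] E j) (hH : ∀ j, IsSelfAdjoint (H j))
    (B : ∀ j, E (j - 1) →L[ℝ] E j) (D : ∀ j, E j) (hD₀ : D 0 = 0) (r : E k₀)
    (hlin : ∀ j, 1 ≤ j → j ≤ N - 1 → j ≠ k₀ → H j (D j) + B j (D (j - 1)) = 0)
    (hlin₀ : H k₀ (D k₀) + r + B k₀ (D (k₀ - 1)) = 0)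
    (g : E (N - 1)) (lam : ∀ j, E j)
    (htop : g + H (N - 1) (lam (N - 1)) = 0)
    -- indexed by `j ≥ 2` rather than `k + 1`, so that `E (k + 1 - 1)` never meets `E k`
    (hrec : ∀ j, 2 ≤ j → j ≤ N - 1 →
      (B j).adjoint (lam j) + H (j - 1) (lam (j - 1)) = 0) :
    ⟪g, D (N - 1)⟫ = ⟪lam k₀, r⟫ := by
  have hsymm : ∀ j, ⟪H j (lam j), D j⟫ = ⟪lam j, H j (D j)⟫ := fun j => (hH j).isSymmetric _ _
  have ha := eq_neg_of_telescoping hk₁ hk₂ (fun j => ⟪lam j, H j (D j)⟫)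
    (fun j => ⟪lam j, B j (D (j - 1))⟫) ⟪lam k₀, r⟫ ?_ ?_ ?_
  · rw [eq_neg_of_add_eq_zero_left htop, inner_neg_left, hsymm, ha, neg_neg]
  · intro j hj₁ hj₂
    by_cases hj : j = k₀
    · subst hj
      rw [if_pos rfl, ← inner_add_right, ← inner_add_right, hlin₀, inner_zero_right]
    · rw [if_neg hj, add_zero, ← inner_add_right, hlin j hj₁ hj₂ hj, inner_zero_right]
  · intro j hj₁ hj₂
    show ⟪lam (j + 1), B (j + 1) (D j)⟫ = -⟪lam j, H j (D j)⟫
    have hadj : (B (j + 1)).adjoint (lam (j + 1)) = -H j (lam j) :=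
      eq_neg_of_add_eq_zero_left (hrec (j + 1) (by omega) (by omega))
    rw [← adjoint_inner_left, hadj, inner_neg_left, hsymm]
  · show ⟪lam 1, B 1 (D 0)⟫ = 0
    rw [hD₀, map_zero, inner_zero_right]

end AdjointMethod

theorem gradient_loss_eq_adjoint_fderiv_gradient_apply {N : ℕ} {n pd qd : ℕ → ℕ}
    (Et : (k : ℕ) → Euc (n k) → Euc (pd k) → Euc (n (k-1)) → Euc (qd k) → ℝ)
    (hEt : ∀ k, ContDiff ℝ 2
      (fun t : Euc (n k) × Euc (pd k) × Euc (n (k-1)) × Euc (qd k) =>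
        Et k t.1 t.2.1 t.2.2.1 t.2.2.2))
    (θ : (k : ℕ) → Euc (pd k)) (ω : (k : ℕ) → Euc (qd k))
    {k₀ : ℕ} (hk₁ : 1 ≤ k₀) (hk₂ : k₀ ≤ N-1)
    (s : (k : ℕ) → Euc (pd k₀) → Euc (n k)) (hs : ∀ k, DifferentiableAt ℝ (s k) (θ k₀))
    (sb : (k : ℕ) → Euc (n k)) (hsb : ∀ k, s k (θ k₀) = sb k)
    (x : Euc (n 0)) (hs₀ : ∀ τ, s 0 τ = x)
    (hseq : ∀ τ, ∀ k, 1 ≤ k → k ≤ N-1 →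
      gradient (fun s' => Et k s' (Function.update θ k₀ τ k) (s (k-1) τ) (ω k)) (s k τ) = 0)
    (ℓ : Euc (n (N-1)) → ℝ) (hℓ : DifferentiableAt ℝ ℓ (sb (N-1)))
    (lam : (k : ℕ) → Euc (n k))
    (hlamtop : gradient ℓ (sb (N-1)) +
      (fderiv ℝ (gradient fun s' => Et (N-1) s' (θ (N-1)) (sb (N-1-1)) (ω (N-1)))
        (sb (N-1))) (lam (N-1)) = 0)
    (hlamrec : ∀ k, 1 ≤ k → k ≤ N-2 →
      (ContinuousLinearMap.adjoint
        (fderiv ℝ (fun u : Euc (n k) =>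
            gradient (fun s' => Et (k+1) s' (θ (k+1)) u (ω (k+1))) (sb (k+1))) (sb k)))
          (lam (k+1)) +
      (fderiv ℝ (gradient fun s' => Et k s' (θ k) (sb (k-1)) (ω k)) (sb k)) (lam k) = 0) :
    gradient (fun τ => ℓ (s (N-1) τ)) (θ k₀) =
      (ContinuousLinearMap.adjoint
        (fderiv ℝ (fun τ => gradient (fun s' => Et k₀ s' τ (sb (k₀-1)) (ω k₀)) (sb k₀))
          (θ k₀))) (lam k₀) := by
  refine ext_inner_right ℝ fun v => ?_
  have hℓs : HasFDerivAt (fun τ => ℓ (s (N-1) τ))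
      (fderiv ℝ ℓ (sb (N-1)) ∘L fderiv ℝ (s (N-1)) (θ k₀)) (θ k₀) := by
    rw [← hsb] at hℓ ⊢
    exact hℓ.hasFDerivAt.comp _ (hs _).hasFDerivAt
  rw [adjoint_inner_left, inner_gradient_left, hℓs.fderiv, comp_apply, ← inner_gradient_left]
  have hC2 : ∀ j p u o, ContDiff ℝ 2 fun s' => Et j s' p u o :=
    fun j p u o => (hEt j).comp (f := fun s' => (s', p, u, o)) (contDiff_id.prodMk contDiff_const)
  have hlin : ∀ j, 1 ≤ j → j ≤ N-1 → ∀ {Dπ : Euc (pd k₀) →L[ℝ] Euc (pd j)},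
      HasFDerivAt (fun τ => Function.update θ k₀ τ j) Dπ (θ k₀) → _ :=
    fun j hj₁ hj₂ Dπ hπ => fderiv_gradient_add_eq_zero_of_gradient_eq_zero (Et j) (hEt j) (ω j)
      (hs j).hasFDerivAt hπ (hs (j-1)).hasFDerivAt (fun τ => hseq τ j hj₁ hj₂) v
  refine inner_eq_inner_of_adjoint_recursion (E := fun j => Euc (n j)) hk₁ hk₂
    (fun j => fderiv ℝ (gradient fun s' => Et j s' (θ j) (sb (j-1)) (ω j)) (sb j))
    (fun j => (isSelfAdjoint_fderiv_gradient (hC2 _ _ _ _).contDiffAt))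
    (fun j => fderiv ℝ (fun u => gradient (fun s' => Et j s' (θ j) u (ω j)) (sb j)) (sb (j-1)))
    (fun j => fderiv ℝ (s j) (θ k₀) v) ?_ _ ?_ ?_ _ lam hlamtop ?_
  · rw [show s 0 = fun _ => x from funext hs₀, fderiv_fun_const, Pi.zero_apply, zero_apply]
  · intro j hj₁ hj₂ hj
    have h := hlin j hj₁ hj₂ (Dπ := 0) (by
      simp only [Function.update_of_ne hj]
      exact hasFDerivAt_const _ _)
    simpa only [Function.update_eq_self, hsb, zero_apply, map_zero, add_zero] using h
  · have h := hlin k₀ hk₁ hk₂ (Dπ := ContinuousLinearMap.id ℝ _) (by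
      simp only [Function.update_self]
      exact hasFDerivAt_id _)
    simpa only [Function.update_eq_self, hsb, id_apply] using h
  · intro j hj₁ hj₂
    obtain ⟨k, rfl⟩ : ∃ k, j = k + 1 := ⟨j - 1, by omega⟩
    exact hlamrec k (by omega) (by omega)

theorem stmt_10_general (N : ℕ) (n pd qd : ℕ → ℕ)
    (Et : (k : ℕ) → Euc (n k) → Euc (pd k) → Euc (n (k-1)) → Euc (qd k) → ℝ)
    (hEt : ∀ k, ContDiff ℝ 2
      (fun t : Euc (n k) × Euc (pd k) × Euc (n (k-1)) × Euc (qd k) =>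
        Et k t.1 t.2.1 t.2.2.1 t.2.2.2))
    (ℓ : Euc (n (N-1)) → ℝ) (hℓ : Differentiable ℝ ℓ)
    (θ : (k : ℕ) → Euc (pd k)) (ω : (k : ℕ) → Euc (qd k))
    (x : Euc (n 0))
    (k₀ : ℕ) (hk₁ : 1 ≤ k₀) (hk₂ : k₀ ≤ N-1)
    -- equilibrium states as a differentiable family of the parameter θ^{k₀}
    (sθ : (k : ℕ) → Euc (pd k₀) → Euc (n k))
    (hsθdiff : ∀ k, ContDiff ℝ 1 (sθ k))
    (hsθ0 : ∀ τ, sθ 0 τ = x)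
    (hsθeq : ∀ τ, ∀ k, 1 ≤ k → k ≤ N-1 →
      gradient (fun s' => Et k s' (Function.update θ k₀ τ k) (sθ (k-1) τ) (ω k))
        (sθ k τ) = 0)
    -- equilibrium states as a differentiable family of the parameter ω^{k₀}
    (sω : (k : ℕ) → Euc (qd k₀) → Euc (n k))
    (hsωdiff : ∀ k, ContDiff ℝ 1 (sω k))
    (hsω0 : ∀ τ, sω 0 τ = x)
    (hsωeq : ∀ τ, ∀ k, 1 ≤ k → k ≤ N-1 →
      gradient (fun s' => Et k s' (θ k) (sω (k-1) τ) (Function.update ω k₀ τ k))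
        (sω k τ) = 0)
    (hbase : ∀ k, sω k (ω k₀) = sθ k (θ k₀))
    -- the Lagrange multipliers at the base point: adjoint (KKT) recursion
    (lam : (k : ℕ) → Euc (n k))
    (hlamtop : gradient ℓ (sθ (N-1) (θ k₀)) +
      (fderiv ℝ (fun sk =>
          gradient (fun s' => Et (N-1) s' (θ (N-1)) (sθ (N-1-1) (θ k₀)) (ω (N-1))) sk)
        (sθ (N-1) (θ k₀))) (lam (N-1)) = 0)
    (hlamrec : ∀ k, 1 ≤ k → k ≤ N-2 →
      (ContinuousLinearMap.adjoint
        (fderiv ℝ (fun u : Euc (n k) =>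
            gradient (fun s' => Et (k+1) s' (θ (k+1)) u (ω (k+1))) (sθ (k+1) (θ k₀)))
          (sθ k (θ k₀)))) (lam (k+1)) +
      (fderiv ℝ (fun sk =>
          gradient (fun s' => Et k s' (θ k) (sθ (k-1) (θ k₀)) (ω k)) sk)
        (sθ k (θ k₀))) (lam k) = 0) :
    gradient (fun τ => ℓ (sθ (N-1) τ)) (θ k₀) =
      (ContinuousLinearMap.adjoint
        (fderiv ℝ (fun τ =>
            gradient (fun s' => Et k₀ s' τ (sθ (k₀-1) (θ k₀)) (ω k₀)) (sθ k₀ (θ k₀)))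
          (θ k₀))) (lam k₀) ∧
    gradient (fun τ => ℓ (sω (N-1) τ)) (ω k₀) =
      (ContinuousLinearMap.adjoint
        (fderiv ℝ (fun τ =>
            gradient (fun s' => Et k₀ s' (θ k₀) (sθ (k₀-1) (θ k₀)) τ) (sθ k₀ (θ k₀)))
          (ω k₀))) (lam k₀) := by
  have hsθ : ∀ k, DifferentiableAt ℝ (sθ k) (θ k₀) :=
    fun k => (hsθdiff k).differentiable one_ne_zero _
  have hsω : ∀ k, DifferentiableAt ℝ (sω k) (ω k₀) :=
    fun k => (hsωdiff k).differentiable one_ne_zero _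
  refine ⟨gradient_loss_eq_adjoint_fderiv_gradient_apply Et hEt θ ω hk₁ hk₂ sθ hsθ
    (fun k => sθ k (θ k₀)) (fun _ => rfl) x hsθ0 hsθeq ℓ (hℓ _) lam hlamtop hlamrec, ?_⟩
  exact gradient_loss_eq_adjoint_fderiv_gradient_apply (fun k s p u o => Et k s o u p)
    (fun k => (hEt k).comp (f := fun t : Euc (n k) × Euc (qd k) × Euc (n (k-1)) × Euc (pd k) =>
      (t.1, t.2.2.2, t.2.2.1, t.2.1)) (by fun_prop))
    ω θ hk₁ hk₂ sω hsω (fun k => sθ k (θ k₀)) hbase x hsω0 hsωeq ℓ (hℓ _) lam hlamtop hlamrec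

/-- Gradient of the multilevel objective via Lagrange multipliers:
`d_{θ^k} C = ∇²_{1,2}Ẽ^k · λ⋆^k` and `d_{ω^k} C = ∇²_{1,4}Ẽ^k · λ⋆^k`, where
`C(W) = ℓ(s^{N−1}⋆(W))` and `(s⋆, λ⋆)` satisfies both stationarity conditions. -/
theorem stmt_10 (N : ℕ) (hN : 2 ≤ N) (n pd qd : ℕ → ℕ)
    (Et : (k : ℕ) → Euc (n k) → Euc (pd k) → Euc (n (k-1)) → Euc (qd k) → ℝ)
    (hEt : ∀ k, ContDiff ℝ 2
      (fun t : Euc (n k) × Euc (pd k) × Euc (n (k-1)) × Euc (qd k) =>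
        Et k t.1 t.2.1 t.2.2.1 t.2.2.2))
    (ℓ : Euc (n (N-1)) → ℝ) (hℓ : Differentiable ℝ ℓ)
    (θ : (k : ℕ) → Euc (pd k)) (ω : (k : ℕ) → Euc (qd k))
    (x : Euc (n 0))
    (k₀ : ℕ) (hk₁ : 1 ≤ k₀) (hk₂ : k₀ ≤ N-1)
    -- equilibrium states as a differentiable family of the parameter θ^{k₀}
    (sθ : (k : ℕ) → Euc (pd k₀) → Euc (n k))
    (hsθdiff : ∀ k, ContDiff ℝ 1 (sθ k))
    (hsθ0 : ∀ τ, sθ 0 τ = x)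
    (hsθeq : ∀ τ, ∀ k, 1 ≤ k → k ≤ N-1 →
      gradient (fun s' => Et k s' (Function.update θ k₀ τ k) (sθ (k-1) τ) (ω k))
        (sθ k τ) = 0)
    -- equilibrium states as a differentiable family of the parameter ω^{k₀}
    (sω : (k : ℕ) → Euc (qd k₀) → Euc (n k))
    (hsωdiff : ∀ k, ContDiff ℝ 1 (sω k))
    (hsω0 : ∀ τ, sω 0 τ = x)
    (hsωeq : ∀ τ, ∀ k, 1 ≤ k → k ≤ N-1 →
      gradient (fun s' => Et k s' (θ k) (sω (k-1) τ) (Function.update ω k₀ τ k))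
        (sω k τ) = 0)
    (hbase : ∀ k, sω k (ω k₀) = sθ k (θ k₀))
    -- the Lagrange multipliers at the base point: adjoint (KKT) recursion
    (lam : (k : ℕ) → Euc (n k))
    (hlamtop : gradient ℓ (sθ (N-1) (θ k₀)) +
      (fderiv ℝ (fun sk =>
          gradient (fun s' => Et (N-1) s' (θ (N-1)) (sθ (N-1-1) (θ k₀)) (ω (N-1))) sk)
        (sθ (N-1) (θ k₀))) (lam (N-1)) = 0)
    (hlamrec : ∀ k, 1 ≤ k → k ≤ N-2 →
      (ContinuousLinearMap.adjoint
        (fderiv ℝ (fun u : Euc (n k) =>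
            gradient (fun s' => Et (k+1) s' (θ (k+1)) u (ω (k+1))) (sθ (k+1) (θ k₀)))
          (sθ k (θ k₀)))) (lam (k+1)) +
      (fderiv ℝ (fun sk =>
          gradient (fun s' => Et k s' (θ k) (sθ (k-1) (θ k₀)) (ω k)) sk)
        (sθ k (θ k₀))) (lam k) = 0) :
    gradient (fun τ => ℓ (sθ (N-1) τ)) (θ k₀) =
      (ContinuousLinearMap.adjoint
        (fderiv ℝ (fun τ =>
            gradient (fun s' => Et k₀ s' τ (sθ (k₀-1) (θ k₀)) (ω k₀)) (sθ k₀ (θ k₀)))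
          (θ k₀))) (lam k₀) ∧
    gradient (fun τ => ℓ (sω (N-1) τ)) (ω k₀) =
      (ContinuousLinearMap.adjoint
        (fderiv ℝ (fun τ =>
            gradient (fun s' => Et k₀ s' (θ k₀) (sθ (k₀-1) (θ k₀)) τ) (sθ k₀ (θ k₀)))
          (ω k₀))) (lam k₀) :=
  stmt_10_general N n pd qd Et hEt ℓ hℓ θ ω x k₀ hk₁ hk₂ sθ hsθdiff hsθ0 hsθeq sω hsωdiff hsω0 hsωeq
    hbase lam hlamtop hlamrec
end
end

section
/- One-dimensional EP exactness: let E : ℝ × ℝ → ℝ, E(s, θ) be smooth with ∂²E/∂s²(s⋆(θ), θ) ≠ 0 at a critical point s⋆(θ) (∂E/∂s(s⋆(θ), θ) = 0) depending smoothly on θ, and let ℓ : ℝ → ℝ be smooth. Suppose s_β is a smooth family with s₀ = s⋆(θ) and ∂E/∂s(s_β, θ) + β ℓ'(s_β) = 0. Then d/dθ [ℓ(s⋆(θ))] = d/dβ [∂E/∂θ(s_β, θ)] |_{β=0}. -/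
/-- One-dimensional EP exactness:
`d/dθ [ℓ(s⋆(θ))] = d/dβ [∂E/∂θ(s_β, θ)]|_{β=0}`. -/
theorem stmt_17
    (E : ℝ → ℝ → ℝ) (hE : ContDiff ℝ (⊤ : ℕ∞) (Function.uncurry E))
    (ℓ : ℝ → ℝ) (hℓ : ContDiff ℝ (⊤ : ℕ∞) ℓ)
    (θ : ℝ) (sstar : ℝ → ℝ) (hsstar : ContDiff ℝ (⊤ : ℕ∞) sstar)
    (V : Set ℝ) (hV : IsOpen V) (hθ : θ ∈ V)
    (hcrit : ∀ θ' ∈ V, deriv (fun u => E u θ') (sstar θ') = 0)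
    (hhess : deriv (deriv (fun u => E u θ)) (sstar θ) ≠ 0)
    (s : ℝ → ℝ) (hs : ContDiff ℝ (⊤ : ℕ∞) s) (hs0 : s 0 = sstar θ)
    (ε : ℝ) (hε : 0 < ε)
    (hnudge : ∀ β ∈ Set.Ioo (-ε) ε,
      deriv (fun u => E u θ) (s β) + β * deriv ℓ (s β) = 0) :
    deriv (fun θ' => ℓ (sstar θ')) θ =
      deriv (fun β => deriv (fun t => E (s β) t) θ) 0 := by
  set f : ℝ × ℝ → ℝ := Function.uncurry E with hfdef
  have hfd : Differentiable ℝ f := hE.differentiable (by simp)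
  have hf' := (contDiff_infty_iff_fderiv.mp (hE.of_le (by simp))).2
  have hfd' : Differentiable ℝ (fderiv ℝ f) := hf'.differentiable (by simp)
  have bilin : ∀ (T : ℝ × ℝ →L[ℝ] ℝ × ℝ →L[ℝ] ℝ) (a b : ℝ) (w : ℝ × ℝ),
      T (a, b) w = a * T (1, 0) w + b * T (0, 1) w := by
    intro T a b w
    have h : ((a, b) : ℝ × ℝ) = a • ((1 : ℝ), (0 : ℝ)) + b • ((0 : ℝ), (1 : ℝ)) := by
      simp [Prod.ext_iff]
    rw [h, map_add, map_smul, map_smul, ContinuousLinearMap.add_apply,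
      ContinuousLinearMap.smul_apply, ContinuousLinearMap.smul_apply, smul_eq_mul, smul_eq_mul]
  -- partial derivatives as fderiv applied to basis vectors
  have key1 : ∀ x y : ℝ, deriv (fun u => E u y) x = fderiv ℝ f (x, y) (1, 0) := by
    intro x y
    have h1 : HasDerivAt (fun u : ℝ => (u, y)) ((1 : ℝ), (0 : ℝ)) x :=
      HasDerivAt.prodMk (hasDerivAt_id x) (hasDerivAt_const x y)
    have h2 : HasDerivAt (fun u : ℝ => f (u, y)) (fderiv ℝ f (x, y) (1, 0)) x :=
      by have := (hfd (x, y)).hasFDerivAt.comp_hasDerivAt x h1; exact this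
    exact h2.deriv
  have key2 : ∀ x y : ℝ, deriv (fun t => E x t) y = fderiv ℝ f (x, y) (0, 1) := by
    intro x y
    have h1 : HasDerivAt (fun t : ℝ => (x, t)) ((0 : ℝ), (1 : ℝ)) y :=
      HasDerivAt.prodMk (hasDerivAt_const y x) (hasDerivAt_id y)
    have h2 : HasDerivAt (fun t : ℝ => f (x, t)) (fderiv ℝ f (x, y) (0, 1)) y :=
      (hfd (x, y)).hasFDerivAt.comp_hasDerivAt y h1
    exact h2.deriv
  -- directional second derivative lemma
  have key3 : ∀ (γ : ℝ → ℝ × ℝ) (t : ℝ) (v : ℝ × ℝ) (w : ℝ × ℝ),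
      HasDerivAt γ v t →
      HasDerivAt (fun t => fderiv ℝ f (γ t) w)
        (fderiv ℝ (fderiv ℝ f) (γ t) v w) t := by
    intro γ t v w hγ
    have h1 : HasDerivAt (fun t => fderiv ℝ f (γ t)) (fderiv ℝ (fderiv ℝ f) (γ t) v) t :=
      (hfd' (γ t)).hasFDerivAt.comp_hasDerivAt t hγ
    have h2 := h1.clm_apply (hasDerivAt_const t w)
    simpa using h2
  set B := fderiv ℝ (fderiv ℝ f) (sstar θ, θ) with hB
  have hsym : B (1, 0) (0, 1) = B (0, 1) (1, 0) :=
    second_derivative_symmetric (fun y => (hfd y).hasFDerivAt)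
      (hfd' (sstar θ, θ)).hasFDerivAt _ _
  have hsd : HasDerivAt sstar (deriv sstar θ) θ :=
    (hsstar.differentiable (by simp) θ).hasDerivAt
  have hsd0 : HasDerivAt s (deriv s 0) 0 := (hs.differentiable (by simp) 0).hasDerivAt
  -- equation from hcrit
  have eq2 : deriv sstar θ * B (1, 0) (1, 0) + B (0, 1) (1, 0) = 0 := by
    have hγ : HasDerivAt (fun θ' => (sstar θ', θ')) (deriv sstar θ, (1 : ℝ)) θ :=
      HasDerivAt.prodMk hsd (hasDerivAt_id θ)
    have h1 : HasDerivAt (fun θ' => fderiv ℝ f (sstar θ', θ') (1, 0))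
        (B (deriv sstar θ, 1) (1, 0)) θ := key3 _ θ _ _ hγ
    have h0 : deriv (fun θ' => fderiv ℝ f (sstar θ', θ') (1, 0)) θ = 0 := by
      have hev : (fun θ' => fderiv ℝ f (sstar θ', θ') (1, 0)) =ᶠ[nhds θ] fun _ => 0 := by
        filter_upwards [hV.mem_nhds hθ] with θ' hθ'
        rw [← key1]
        exact hcrit θ' hθ'
      rw [Filter.EventuallyEq.deriv_eq hev, deriv_const]
    have : B (deriv sstar θ, 1) (1, 0) = 0 := by rw [← h1.deriv, h0]
    rw [bilin B] at this
    linarith [this]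
  -- equation from hnudge
  have eq3 : deriv s 0 * B (1, 0) (1, 0) + deriv ℓ (sstar θ) = 0 := by
    have hγ : HasDerivAt (fun β => (s β, θ)) (deriv s 0, (0 : ℝ)) 0 :=
      HasDerivAt.prodMk hsd0 (hasDerivAt_const 0 θ)
    have h1 : HasDerivAt (fun β => fderiv ℝ f (s β, θ) (1, 0))
        (fderiv ℝ (fderiv ℝ f) (s 0, θ) (deriv s 0, 0) (1, 0)) 0 := key3 _ 0 _ _ hγ
    have hℓ' := (contDiff_infty_iff_deriv.mp (hℓ.of_le (by simp))).2
    have h2 : HasDerivAt (fun β => deriv ℓ (s β))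
        (deriv (fun β => deriv ℓ (s β)) 0) 0 :=
      (((hℓ'.comp (hs.of_le (by simp))).differentiable (by simp)) 0).hasDerivAt
    have h3 : HasDerivAt (fun β : ℝ => β * deriv ℓ (s β))
        (1 * deriv ℓ (s 0) + 0 * deriv (fun β => deriv ℓ (s β)) 0) 0 :=
      (hasDerivAt_id 0).mul h2
    have h4 := h1.add h3
    have h0 : deriv (fun β => fderiv ℝ f (s β, θ) (1, 0) + β * deriv ℓ (s β)) 0 = 0 := by
      have hev : (fun β => fderiv ℝ f (s β, θ) (1, 0) + β * deriv ℓ (s β))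
          =ᶠ[nhds 0] fun _ => 0 := by
        filter_upwards [Ioo_mem_nhds (by linarith : -ε < 0) hε] with β hβ
        rw [← key1]
        exact hnudge β hβ
      rw [Filter.EventuallyEq.deriv_eq hev, deriv_const]
    have h5 : fderiv ℝ (fderiv ℝ f) (s 0, θ) (deriv s 0, 0) (1, 0)
        + (1 * deriv ℓ (s 0) + 0 * deriv (fun β => deriv ℓ (s β)) 0) = 0 := by
      rw [← h4.deriv]; exact h0
    rw [hs0, ← hB, bilin B] at h5
    linarith [h5]
  -- LHS
  have hLHS : deriv (fun θ' => ℓ (sstar θ')) θ = deriv ℓ (sstar θ) * deriv sstar θ := by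
    have := ((hℓ.differentiable (by simp) (sstar θ)).hasDerivAt.comp θ hsd).deriv
    simpa [Function.comp_def] using this
  -- RHS
  have hRHS : deriv (fun β => deriv (fun t => E (s β) t) θ) 0 = deriv s 0 * B (1, 0) (0, 1) := by
    have hγ : HasDerivAt (fun β => (s β, θ)) (deriv s 0, (0 : ℝ)) 0 :=
      HasDerivAt.prodMk hsd0 (hasDerivAt_const 0 θ)
    have h1 : HasDerivAt (fun β => fderiv ℝ f (s β, θ) (0, 1))
        (fderiv ℝ (fderiv ℝ f) (s 0, θ) (deriv s 0, 0) (0, 1)) 0 := key3 _ 0 _ _ hγ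
    have heq : (fun β => deriv (fun t => E (s β) t) θ)
        = fun β => fderiv ℝ f (s β, θ) (0, 1) := by
      funext β; exact key2 (s β) θ
    rw [heq, h1.deriv, hs0, ← hB, bilin B]
    ring
  rw [hLHS, hRHS, hsym]
  linear_combination deriv sstar θ * eq3 - deriv s 0 * eq2
end
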